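/- arXiv:2112.08580 — 2 statements merged into one kernel-verified Lean document; each statement's English description precedes it below -/
import Mathlib

section
/- (Anisotropic trace estimate.) Let ι, θ > 0 and let B̄ : 𝕋² × [0,ι] → ℝ³ be a C¹ vector field with |B̄₃| ≥ θ everywhere on 𝕋² × [0,ι]. Then there exists a constant C > 0, depending only on the C¹ norm of B̄, on θ and on ι, such that for every C¹ function f : 𝕋² × [0,ι] → ℝ one has |f|₀² ≤ C ( ‖B̄·∇f‖₀ ‖f‖₀ + ‖f‖₀² ). -/
noncomputable section

open Set MeasureTheory

/-- The periodic slab `𝕋² × [0,ι]`, realized as the subset of `ℝ × ℝ × ℝ` with third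
coordinate in `[0,ι]` (functions on it are taken `1`-periodic in the first two variables). -/
def slab (ι : ℝ) : Set (ℝ × ℝ × ℝ) := {z | z.2.2 ∈ Set.Icc 0 ι}

/-- `1`-periodicity in the first two (toroidal) variables. -/
def TorusPeriodic (g : ℝ × ℝ × ℝ → ℝ) : Prop :=
  (∀ z : ℝ × ℝ × ℝ, g (z.1 + 1, z.2.1, z.2.2) = g z) ∧
  ∀ z : ℝ × ℝ × ℝ, g (z.1, z.2.1 + 1, z.2.2) = g z

/-- `B̄·∇f = Σᵢ B̄ᵢ ∂ᵢ f`. -/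
def Bgrad (B : ℝ × ℝ × ℝ → ℝ × ℝ × ℝ) (f : ℝ × ℝ × ℝ → ℝ) (z : ℝ × ℝ × ℝ) : ℝ :=
  (B z).1 * fderiv ℝ f z (1, 0, 0) + (B z).2.1 * fderiv ℝ f z (0, 1, 0) +
    (B z).2.2 * fderiv ℝ f z (0, 0, 1)

/-- The fundamental domain `𝕋² × (0,ι)` of the open slab. -/
def slabCell (ι : ℝ) : Set (ℝ × ℝ × ℝ) := Ioo (0 : ℝ) 1 ×ˢ Ioo (0 : ℝ) 1 ×ˢ Ioo (0 : ℝ) ι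

/-! ### Auxiliary lemmas -/

abbrev e1v : ℝ × ℝ × ℝ := (1, 0, 0)
abbrev e2v : ℝ × ℝ × ℝ := (0, 1, 0)
abbrev e3v : ℝ × ℝ × ℝ := (0, 0, 1)

lemma hasDerivAt_line1 {g : ℝ×ℝ×ℝ→ℝ} {p : ℝ×ℝ×ℝ} (h : DifferentiableAt ℝ g p) :
    HasDerivAt (fun t => g (t, p.2.1, p.2.2)) (fderiv ℝ g p e1v) p.1 :=
  h.hasFDerivAt.comp_hasDerivAt p.1
    ((hasDerivAt_id p.1).prodMk ((hasDerivAt_const p.1 p.2.1).prodMk (hasDerivAt_const p.1 p.2.2)))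

lemma hasDerivAt_line2 {g : ℝ×ℝ×ℝ→ℝ} {p : ℝ×ℝ×ℝ} (h : DifferentiableAt ℝ g p) :
    HasDerivAt (fun t => g (p.1, t, p.2.2)) (fderiv ℝ g p e2v) p.2.1 :=
  h.hasFDerivAt.comp_hasDerivAt p.2.1
    ((hasDerivAt_const p.2.1 p.1).prodMk ((hasDerivAt_id p.2.1).prodMk (hasDerivAt_const p.2.1 p.2.2)))

lemma hasDerivAt_line3 {g : ℝ×ℝ×ℝ→ℝ} {p : ℝ×ℝ×ℝ} (h : DifferentiableAt ℝ g p) :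
    HasDerivAt (fun t => g (p.1, p.2.1, t)) (fderiv ℝ g p e3v) p.2.2 :=
  h.hasFDerivAt.comp_hasDerivAt p.2.2
    ((hasDerivAt_const p.2.2 p.1).prodMk ((hasDerivAt_const p.2.2 p.2.1).prodMk (hasDerivAt_id p.2.2)))

def slabU (ι : ℝ) : Set (ℝ×ℝ×ℝ) := {z : ℝ×ℝ×ℝ | z.2.2 ∈ Ioo 0 ι}

lemma isOpen_slabU (ι : ℝ) : IsOpen (slabU ι) :=
  (isOpen_Ioo).preimage (continuous_snd.comp continuous_snd)

lemma slabU_subset (ι : ℝ) : slabU ι ⊆ slab ι := fun _ hz => Ioo_subset_Icc_self hz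

lemma slab_mem_nhds {ι : ℝ} {p : ℝ×ℝ×ℝ} (hp : p.2.2 ∈ Ioo 0 ι) : slab ι ∈ nhds p :=
  Filter.mem_of_superset ((isOpen_slabU ι).mem_nhds hp) (slabU_subset ι)

lemma uniqueDiffOn_slab {ι : ℝ} (hι : 0 < ι) : UniqueDiffOn ℝ (slab ι) := by
  have h : slab ι = (univ : Set ℝ) ×ˢ ((univ : Set ℝ) ×ˢ Icc 0 ι) := by
    ext z; simp [slab, Set.mem_prod]
  rw [h]
  exact uniqueDiffOn_univ.prod (uniqueDiffOn_univ.prod (uniqueDiffOn_Icc hι))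

lemma sK {ι : ℝ} : slabCell ι ⊆ Icc (0:ℝ) 1 ×ˢ Icc (0:ℝ) 1 ×ˢ Icc (0:ℝ) ι := by
  intro p hp
  exact ⟨Ioo_subset_Icc_self hp.1, Ioo_subset_Icc_self hp.2.1, Ioo_subset_Icc_self hp.2.2⟩

lemma Ksub {ι : ℝ} : Icc (0:ℝ) 1 ×ˢ Icc (0:ℝ) 1 ×ˢ Icc (0:ℝ) ι ⊆ slab ι :=
  fun p hp => hp.2.2

lemma cell_subset_slabU {ι : ℝ} : slabCell ι ⊆ slabU ι := fun _ hp => hp.2.2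

lemma norm_e1v : ‖e1v‖ ≤ 1 := by simp [Prod.norm_def]
lemma norm_e2v : ‖e2v‖ ≤ 1 := by simp [Prod.norm_def]
lemma norm_e3v : ‖e3v‖ ≤ 1 := by simp [Prod.norm_def]

lemma bound_aux {ι : ℝ} (hι : 0 < ι) {g : ℝ×ℝ×ℝ→ℝ} (hg : ContDiffOn ℝ 1 g (slab ι)) :
    ∃ M : ℝ, 0 < M ∧ ∀ p ∈ slabCell ι, |g p| ≤ M ∧
      ∀ v : ℝ×ℝ×ℝ, ‖v‖ ≤ 1 → |fderiv ℝ g p v| ≤ M := by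
  have hK : IsCompact (Icc (0:ℝ) 1 ×ˢ Icc (0:ℝ) 1 ×ˢ Icc (0:ℝ) ι) :=
    isCompact_Icc.prod (isCompact_Icc.prod isCompact_Icc)
  obtain ⟨M₁, hM₁⟩ := hK.exists_bound_of_continuousOn (hg.continuousOn.mono Ksub)
  obtain ⟨M₂, hM₂⟩ := hK.exists_bound_of_continuousOn
    ((hg.continuousOn_fderivWithin (uniqueDiffOn_slab hι) le_rfl).mono Ksub)
  refine ⟨max (max M₁ M₂) 0 + 1, by positivity, fun p hp => ?_⟩
  have hpK := sK hp
  have hfd : fderiv ℝ g p = fderivWithin ℝ g (slab ι) p :=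
    (fderivWithin_of_mem_nhds (slab_mem_nhds hp.2.2)).symm
  constructor
  · have h1 := hM₁ p hpK
    rw [Real.norm_eq_abs] at h1
    linarith [le_max_left M₁ M₂, le_max_left (max M₁ M₂) (0:ℝ)]
  · intro v hv
    have h2 : ‖fderiv ℝ g p‖ ≤ M₂ := hfd ▸ hM₂ p hpK
    calc |fderiv ℝ g p v| ≤ ‖fderiv ℝ g p‖ * ‖v‖ := (fderiv ℝ g p).le_opNorm v
      _ ≤ M₂ * 1 := mul_le_mul h2 hv (norm_nonneg v) ((norm_nonneg _).trans h2)
      _ ≤ _ := by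
          rw [mul_one]
          linarith [le_max_right M₁ M₂, le_max_left (max M₁ M₂) (0:ℝ)]

lemma integrableOn_of_bound {α : Type*} [MeasurableSpace α] {μ : Measure α} {s : Set α}
    (hs : MeasurableSet s) (hfin : μ s < ⊤) {g : α → ℝ} {M : ℝ}
    (hm : AEStronglyMeasurable g (μ.restrict s)) (hb : ∀ p ∈ s, |g p| ≤ M) :
    IntegrableOn g s μ := by
  refine Integrable.mono' (g := fun _ => M) ?_ hm ?_
  · exact integrableOn_const hfin.ne
  · exact (ae_restrict_iff' hs).2 (Filter.Eventually.of_forall hb)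

lemma setIntegral_prod_symm' {α β : Type*} [MeasurableSpace α] [MeasurableSpace β]
    {μ : Measure α} {ν : Measure β} [SigmaFinite μ] [SigmaFinite ν]
    (f : α × β → ℝ) {s : Set α} {t : Set β}
    (hf : IntegrableOn f (s ×ˢ t) (μ.prod ν)) :
    ∫ z in s ×ˢ t, f z ∂(μ.prod ν) = ∫ y in t, ∫ x in s, f (x, y) ∂μ ∂ν := by
  simp only [← Measure.prod_restrict s t, IntegrableOn] at hf ⊢
  exact integral_prod_symm f hf

lemma cauchy_schwarz_integral {α : Type*} [MeasurableSpace α] {μ : Measure α}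
    [IsFiniteMeasure μ] {u v : α → ℝ}
    (hu : AEStronglyMeasurable u μ) (hv : AEStronglyMeasurable v μ)
    {Mu Mv : ℝ} (hub : ∀ᵐ a ∂μ, ‖u a‖ ≤ Mu) (hvb : ∀ᵐ a ∂μ, ‖v a‖ ≤ Mv) :
    ∫ a, |u a * v a| ∂μ ≤ Real.sqrt (∫ a, u a ^ 2 ∂μ) * Real.sqrt (∫ a, v a ^ 2 ∂μ) := by
  have hu2 : MemLp u (ENNReal.ofReal 2) μ := by
    rw [ENNReal.ofReal_ofNat]
    exact MemLp.of_bound hu Mu hub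
  have hv2 : MemLp v (ENNReal.ofReal 2) μ := by
    rw [ENNReal.ofReal_ofNat]
    exact MemLp.of_bound hv Mv hvb
  have h := integral_mul_norm_le_Lp_mul_Lq (by constructor <;> norm_num)
      (μ := μ) (f := u) (g := v) hu2 hv2
  have e1 : ∀ a, |u a * v a| = ‖u a‖ * ‖v a‖ := by
    intro a; rw [abs_mul]; rfl
  have e2 : ∀ (w : α → ℝ) a, ‖w a‖ ^ (2:ℝ) = w a ^ 2 := by
    intro w a
    rw [show ((2:ℝ)) = ((2:ℕ):ℝ) by norm_num, Real.rpow_natCast]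
    simp [sq_abs, Real.norm_eq_abs]
  simp only [e1]
  calc ∫ a, ‖u a‖ * ‖v a‖ ∂μ
      ≤ (∫ a, ‖u a‖ ^ (2:ℝ) ∂μ) ^ (1/(2:ℝ)) * (∫ a, ‖v a‖ ^ (2:ℝ) ∂μ) ^ (1/(2:ℝ)) := h
    _ = Real.sqrt (∫ a, u a ^ 2 ∂μ) * Real.sqrt (∫ a, v a ^ 2 ∂μ) := by
        simp only [e2]
        rw [Real.sqrt_eq_rpow, Real.sqrt_eq_rpow]

lemma abs_mul_le' {x y X Y : ℝ} (hx : |x| ≤ X) (hy : |y| ≤ Y) : |x*y| ≤ X*Y := by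
  rw [abs_mul]; exact mul_le_mul hx hy (abs_nonneg _) ((abs_nonneg _).trans hx)

/-! ### The integrand pieces -/

def Aterm (u g w : ℝ×ℝ×ℝ→ℝ) (v : ℝ×ℝ×ℝ) (p : ℝ×ℝ×ℝ) : ℝ :=
  (fderiv ℝ u p v * (g p * g p) + u p * (fderiv ℝ g p v * g p + g p * fderiv ℝ g p v)) * w p
    + u p * (g p * g p) * fderiv ℝ w p v

def Vfun (ι : ℝ) (u g w : ℝ×ℝ×ℝ→ℝ) (p : ℝ×ℝ×ℝ) : ℝ :=
  (1 - p.2.2/ι) * (u p * (g p * g p) * w p)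

def E1f (ι : ℝ) (u g w : ℝ×ℝ×ℝ→ℝ) (p : ℝ×ℝ×ℝ) : ℝ := (1 - p.2.2/ι) * Aterm u g w e1v p
def E2f (ι : ℝ) (u g w : ℝ×ℝ×ℝ→ℝ) (p : ℝ×ℝ×ℝ) : ℝ := (1 - p.2.2/ι) * Aterm u g w e2v p
def E3f (ι : ℝ) (u g w : ℝ×ℝ×ℝ→ℝ) (p : ℝ×ℝ×ℝ) : ℝ :=
  -(1/ι) * (u p * (g p * g p) * w p) + (1 - p.2.2/ι) * Aterm u g w e3v p

lemma hasDerivAt_V1 {ι : ℝ} {u g w : ℝ×ℝ×ℝ→ℝ} {p : ℝ×ℝ×ℝ}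
    (hu : DifferentiableAt ℝ u p) (hg : DifferentiableAt ℝ g p)
    (hw : DifferentiableAt ℝ w p) :
    HasDerivAt (fun t => Vfun ι u g w (t, p.2.1, p.2.2)) (E1f ι u g w p) p.1 := by
  have h := (((hasDerivAt_line1 hu).mul ((hasDerivAt_line1 hg).mul (hasDerivAt_line1 hg))).mul
    (hasDerivAt_line1 hw)).const_mul (1 - p.2.2/ι)
  simpa [Vfun, E1f, Aterm] using h

lemma hasDerivAt_V2 {ι : ℝ} {u g w : ℝ×ℝ×ℝ→ℝ} {p : ℝ×ℝ×ℝ}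
    (hu : DifferentiableAt ℝ u p) (hg : DifferentiableAt ℝ g p)
    (hw : DifferentiableAt ℝ w p) :
    HasDerivAt (fun t => Vfun ι u g w (p.1, t, p.2.2)) (E2f ι u g w p) p.2.1 := by
  have h := (((hasDerivAt_line2 hu).mul ((hasDerivAt_line2 hg).mul (hasDerivAt_line2 hg))).mul
    (hasDerivAt_line2 hw)).const_mul (1 - p.2.2/ι)
  simpa [Vfun, E2f, Aterm] using h

lemma hasDerivAt_V3 {ι : ℝ} {u g w : ℝ×ℝ×ℝ→ℝ} {p : ℝ×ℝ×ℝ}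
    (hu : DifferentiableAt ℝ u p) (hg : DifferentiableAt ℝ g p)
    (hw : DifferentiableAt ℝ w p) :
    HasDerivAt (fun t => Vfun ι u g w (p.1, p.2.1, t)) (E3f ι u g w p) p.2.2 := by
  have hχ : HasDerivAt (fun t : ℝ => 1 - t/ι) (-(1/ι)) p.2.2 := by
    simpa using ((hasDerivAt_id p.2.2).div_const ι).const_sub 1
  have h : HasDerivAt (fun t => (1 - t/ι) * (u (p.1, p.2.1, t) * (g (p.1, p.2.1, t) *
      g (p.1, p.2.1, t)) * w (p.1, p.2.1, t))) _ p.2.2 := hχ.mul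
    (((hasDerivAt_line3 hu).mul ((hasDerivAt_line3 hg).mul (hasDerivAt_line3 hg))).mul
      (hasDerivAt_line3 hw))
  simpa [Vfun, E3f, Aterm] using h

section Claims
variable {ι : ℝ}

lemma diffAt_U {g : ℝ×ℝ×ℝ→ℝ} (hg : ContDiffOn ℝ 1 g (slab ι)) {p : ℝ×ℝ×ℝ}
    (hp : p.2.2 ∈ Ioo 0 ι) : DifferentiableAt ℝ g p :=
  ((hg.differentiableOn one_ne_zero) p (slabU_subset ι hp)).differentiableAt (slab_mem_nhds hp)

lemma contOn_U {g : ℝ×ℝ×ℝ→ℝ} (hg : ContDiffOn ℝ 1 g (slab ι)) :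
    ContinuousOn g (slabU ι) := (hg.mono (slabU_subset ι)).continuousOn

lemma contOn_fderiv_U {g : ℝ×ℝ×ℝ→ℝ} (hg : ContDiffOn ℝ 1 g (slab ι)) (v : ℝ×ℝ×ℝ) :
    ContinuousOn (fun p => fderiv ℝ g p v) (slabU ι) :=
  ((hg.mono (slabU_subset ι)).continuousOn_fderiv_of_isOpen (isOpen_slabU ι) le_rfl).clm_apply
    continuousOn_const

lemma contOn_Aterm {u g w : ℝ×ℝ×ℝ→ℝ} (hu : ContDiffOn ℝ 1 u (slab ι))
    (hg : ContDiffOn ℝ 1 g (slab ι)) (hw : ContDiffOn ℝ 1 w (slab ι)) (v : ℝ×ℝ×ℝ) :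
    ContinuousOn (Aterm u g w v) (slabU ι) := by
  have huc := contOn_U hu; have hgc := contOn_U hg; have hwc := contOn_U hw
  have hdu := contOn_fderiv_U hu v; have hdg := contOn_fderiv_U hg v
  have hdw := contOn_fderiv_U hw v
  exact (((hdu.mul (hgc.mul hgc)).add (huc.mul ((hdg.mul hgc).add (hgc.mul hdg)))).mul hwc).add
    ((huc.mul (hgc.mul hgc)).mul hdw)

lemma contOn_chi : ContinuousOn (fun p : ℝ×ℝ×ℝ => 1 - p.2.2/ι) (slabU ι) :=
  (continuous_const.sub ((continuous_snd.comp continuous_snd).div_const ι)).continuousOn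

lemma contOn_E1U {u g w : ℝ×ℝ×ℝ→ℝ} (hu : ContDiffOn ℝ 1 u (slab ι))
    (hg : ContDiffOn ℝ 1 g (slab ι)) (hw : ContDiffOn ℝ 1 w (slab ι)) :
    ContinuousOn (E1f ι u g w) (slabU ι) := contOn_chi.mul (contOn_Aterm hu hg hw e1v)

lemma contOn_E2U {u g w : ℝ×ℝ×ℝ→ℝ} (hu : ContDiffOn ℝ 1 u (slab ι))
    (hg : ContDiffOn ℝ 1 g (slab ι)) (hw : ContDiffOn ℝ 1 w (slab ι)) :
    ContinuousOn (E2f ι u g w) (slabU ι) := contOn_chi.mul (contOn_Aterm hu hg hw e2v)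

lemma contOn_E3U {u g w : ℝ×ℝ×ℝ→ℝ} (hu : ContDiffOn ℝ 1 u (slab ι))
    (hg : ContDiffOn ℝ 1 g (slab ι)) (hw : ContDiffOn ℝ 1 w (slab ι)) :
    ContinuousOn (E3f ι u g w) (slabU ι) :=
  (continuousOn_const.mul (((contOn_U hu).mul ((contOn_U hg).mul (contOn_U hg))).mul
    (contOn_U hw))).add (contOn_chi.mul (contOn_Aterm hu hg hw e3v))

lemma hcellm : MeasurableSet (slabCell ι) :=
  measurableSet_Ioo.prod (measurableSet_Ioo.prod measurableSet_Ioo)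

lemma hcellfin : volume (slabCell ι) < ⊤ :=
  lt_of_le_of_lt (measure_mono sK)
    ((isCompact_Icc.prod (isCompact_Icc.prod isCompact_Icc)).measure_lt_top)

lemma hQm : MeasurableSet (Ioo (0:ℝ) 1 ×ˢ Ioo (0:ℝ) ι) :=
  measurableSet_Ioo.prod measurableSet_Ioo

lemma hQfin : volume (Ioo (0:ℝ) 1 ×ˢ Ioo (0:ℝ) ι) < ⊤ :=
  lt_of_le_of_lt (measure_mono (prod_mono Ioo_subset_Icc_self Ioo_subset_Icc_self))
    ((isCompact_Icc.prod isCompact_Icc).measure_lt_top)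

lemma claimA (hι : 0 < ι) (u g w : ℝ×ℝ×ℝ→ℝ)
    (hu : ContDiffOn ℝ 1 u (slab ι)) (hg : ContDiffOn ℝ 1 g (slab ι))
    (hw : ContDiffOn ℝ 1 w (slab ι))
    (hpu : ∀ z : ℝ×ℝ×ℝ, u (z.1 + 1, z.2.1, z.2.2) = u z)
    (hpg : ∀ z : ℝ×ℝ×ℝ, g (z.1 + 1, z.2.1, z.2.2) = g z)
    (hpw : ∀ z : ℝ×ℝ×ℝ, w (z.1 + 1, z.2.1, z.2.2) = w z)
    (c : ℝ) (hbd : ∀ p ∈ slabCell ι, |E1f ι u g w p| ≤ c) :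
    ∫ z in slabCell ι, E1f ι u g w z = 0 := by
  have hE1c : ContinuousOn (E1f ι u g w) (slabU ι) := contOn_E1U hu hg hw
  have hint : IntegrableOn (E1f ι u g w) (slabCell ι) :=
    integrableOn_of_bound hcellm hcellfin
      ((hE1c.mono cell_subset_slabU).aestronglyMeasurable hcellm) hbd
  rw [show slabCell ι = Ioo (0:ℝ) 1 ×ˢ (Ioo (0:ℝ) 1 ×ˢ Ioo (0:ℝ) ι) from rfl,
    Measure.volume_eq_prod ℝ (ℝ×ℝ)] at hint ⊢
  rw [setIntegral_prod_symm' _ hint]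
  have inner : ∀ y ∈ (Ioo (0:ℝ) 1 ×ˢ Ioo (0:ℝ) ι : Set (ℝ×ℝ)),
      (∫ x₁ in Ioo (0:ℝ) 1, E1f ι u g w (x₁, y)) = 0 := by
    intro y hy
    have hy2 : y.2 ∈ Ioo (0:ℝ) ι := hy.2
    have hcontline : ContinuousOn (fun t => E1f ι u g w (t, y)) (uIcc (0:ℝ) 1) :=
      hE1c.comp (Continuous.continuousOn (by fun_prop)) (fun t _ => hy2)
    have hderiv : ∀ t ∈ uIcc (0:ℝ) 1,
        HasDerivAt (fun s => Vfun ι u g w (s, y)) (E1f ι u g w (t, y)) t := by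
      intro t _
      exact hasDerivAt_V1 (p := (t, y)) (diffAt_U hu hy2) (diffAt_U hg hy2) (diffAt_U hw hy2)
    have hFTC := intervalIntegral.integral_eq_sub_of_hasDerivAt hderiv
      hcontline.intervalIntegrable
    have hper : Vfun ι u g w ((1:ℝ), y) = Vfun ι u g w ((0:ℝ), y) := by
      have h1 := hpu (0, y.1, y.2); have h2 := hpg (0, y.1, y.2); have h3 := hpw (0, y.1, y.2)
      simp only [zero_add] at h1 h2 h3
      simp only [Vfun]
      rw [show ((1:ℝ), y) = ((1:ℝ), y.1, y.2) from rfl,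
        show ((0:ℝ), y) = ((0:ℝ), y.1, y.2) from rfl]
      simp [h1, h2, h3]
    calc ∫ x₁ in Ioo (0:ℝ) 1, E1f ι u g w (x₁, y)
        = ∫ x₁ in Ioc (0:ℝ) 1, E1f ι u g w (x₁, y) := integral_Ioc_eq_integral_Ioo.symm
      _ = ∫ x₁ in (0:ℝ)..1, E1f ι u g w (x₁, y) :=
          (intervalIntegral.integral_of_le zero_le_one).symm
      _ = Vfun ι u g w (1, y) - Vfun ι u g w (0, y) := hFTC
      _ = 0 := by rw [hper, sub_self]
  rw [setIntegral_congr_fun hQm inner]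
  simp

lemma claimB (hι : 0 < ι) (u g w : ℝ×ℝ×ℝ→ℝ)
    (hu : ContDiffOn ℝ 1 u (slab ι)) (hg : ContDiffOn ℝ 1 g (slab ι))
    (hw : ContDiffOn ℝ 1 w (slab ι))
    (hpu : ∀ z : ℝ×ℝ×ℝ, u (z.1, z.2.1 + 1, z.2.2) = u z)
    (hpg : ∀ z : ℝ×ℝ×ℝ, g (z.1, z.2.1 + 1, z.2.2) = g z)
    (hpw : ∀ z : ℝ×ℝ×ℝ, w (z.1, z.2.1 + 1, z.2.2) = w z)
    (c : ℝ) (hbd : ∀ p ∈ slabCell ι, |E2f ι u g w p| ≤ c) :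
    ∫ z in slabCell ι, E2f ι u g w z = 0 := by
  have hE2c : ContinuousOn (E2f ι u g w) (slabU ι) := contOn_E2U hu hg hw
  have hint : IntegrableOn (E2f ι u g w) (slabCell ι) :=
    integrableOn_of_bound hcellm hcellfin
      ((hE2c.mono cell_subset_slabU).aestronglyMeasurable hcellm) hbd
  rw [show slabCell ι = Ioo (0:ℝ) 1 ×ˢ (Ioo (0:ℝ) 1 ×ˢ Ioo (0:ℝ) ι) from rfl,
    Measure.volume_eq_prod ℝ (ℝ×ℝ)] at hint ⊢
  rw [setIntegral_prod _ hint]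
  have inner : ∀ x₁ ∈ Ioo (0:ℝ) 1,
      (∫ y in Ioo (0:ℝ) 1 ×ˢ Ioo (0:ℝ) ι, E2f ι u g w (x₁, y)) = 0 := by
    intro x₁ hx₁
    have hslice : IntegrableOn (fun y : ℝ×ℝ => E2f ι u g w (x₁, y))
        (Ioo (0:ℝ) 1 ×ˢ Ioo (0:ℝ) ι) :=
      integrableOn_of_bound hQm hQfin
        ((hE2c.comp (Continuous.continuousOn (by fun_prop))
          (fun y hy => hy.2)).aestronglyMeasurable hQm)
        (fun y hy => hbd (x₁, y) ⟨hx₁, hy⟩)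
    rw [Measure.volume_eq_prod ℝ ℝ] at hslice ⊢
    rw [setIntegral_prod_symm' _ hslice]
    have inner2 : ∀ t ∈ Ioo (0:ℝ) ι,
        (∫ x₂ in Ioo (0:ℝ) 1, E2f ι u g w (x₁, x₂, t)) = 0 := by
      intro t ht
      have hcontline : ContinuousOn (fun s => E2f ι u g w (x₁, s, t)) (uIcc (0:ℝ) 1) :=
        hE2c.comp (Continuous.continuousOn (by fun_prop)) (fun s _ => ht)
      have hderiv : ∀ s ∈ uIcc (0:ℝ) 1,
          HasDerivAt (fun s' => Vfun ι u g w (x₁, s', t)) (E2f ι u g w (x₁, s, t)) s :=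
        fun s _ =>
          hasDerivAt_V2 (p := (x₁, s, t)) (diffAt_U hu ht) (diffAt_U hg ht) (diffAt_U hw ht)
      have hFTC := intervalIntegral.integral_eq_sub_of_hasDerivAt hderiv
        hcontline.intervalIntegrable
      have hper : Vfun ι u g w (x₁, (1:ℝ), t) = Vfun ι u g w (x₁, (0:ℝ), t) := by
        have h1 := hpu (x₁, 0, t); have h2 := hpg (x₁, 0, t); have h3 := hpw (x₁, 0, t)
        simp only [zero_add] at h1 h2 h3
        simp [Vfun, h1, h2, h3]
      calc (∫ x₂ in Ioo (0:ℝ) 1, E2f ι u g w (x₁, x₂, t))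
          = ∫ x₂ in Ioc (0:ℝ) 1, E2f ι u g w (x₁, x₂, t) := integral_Ioc_eq_integral_Ioo.symm
        _ = ∫ x₂ in (0:ℝ)..1, E2f ι u g w (x₁, x₂, t) :=
            (intervalIntegral.integral_of_le zero_le_one).symm
        _ = Vfun ι u g w (x₁, 1, t) - Vfun ι u g w (x₁, 0, t) := hFTC
        _ = 0 := by rw [hper, sub_self]
    rw [setIntegral_congr_fun measurableSet_Ioo inner2]
    simp
  rw [setIntegral_congr_fun measurableSet_Ioo inner]
  simp

lemma claimC (hι : 0 < ι) (u g : ℝ×ℝ×ℝ→ℝ)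
    (hu : ContDiffOn ℝ 1 u (slab ι)) (hg : ContDiffOn ℝ 1 g (slab ι))
    (c : ℝ) (hbd : ∀ p ∈ slabCell ι, |E3f ι u g u p| ≤ c) :
    ∫ z in slabCell ι, E3f ι u g u z
      = - ∫ x in Ioo (0:ℝ) 1 ×ˢ Ioo (0:ℝ) 1,
          (u (x.1,x.2,0) * (g (x.1,x.2,0) * g (x.1,x.2,0)) * u (x.1,x.2,0)) := by
  have hE3c : ContinuousOn (E3f ι u g u) (slabU ι) := contOn_E3U hu hg hu
  have hint : IntegrableOn (E3f ι u g u) (slabCell ι) :=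
    integrableOn_of_bound hcellm hcellfin
      ((hE3c.mono cell_subset_slabU).aestronglyMeasurable hcellm) hbd
  have hmaps : ∀ x ∈ (Icc (0:ℝ) 1 ×ˢ Icc (0:ℝ) 1 : Set (ℝ×ℝ)),
      ((x.1, x.2, 0) : ℝ×ℝ×ℝ) ∈ slab ι := fun x _ => ⟨le_rfl, hι.le⟩
  have hcu : ContinuousOn (fun x : ℝ×ℝ => u (x.1, x.2, 0)) (Icc (0:ℝ) 1 ×ˢ Icc (0:ℝ) 1) :=
    hu.continuousOn.comp (Continuous.continuousOn (by fun_prop)) hmaps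
  have hcg : ContinuousOn (fun x : ℝ×ℝ => g (x.1, x.2, 0)) (Icc (0:ℝ) 1 ×ˢ Icc (0:ℝ) 1) :=
    hg.continuousOn.comp (Continuous.continuousOn (by fun_prop)) hmaps
  have htrint : IntegrableOn
      (fun x : ℝ×ℝ => u (x.1,x.2,0) * (g (x.1,x.2,0) * g (x.1,x.2,0)) * u (x.1,x.2,0))
      (Ioo (0:ℝ) 1 ×ˢ Ioo (0:ℝ) 1) :=
    (((hcu.mul (hcg.mul hcg)).mul hcu).integrableOn_compact
      (isCompact_Icc.prod isCompact_Icc)).mono_set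
      (prod_mono Ioo_subset_Icc_self Ioo_subset_Icc_self)
  rw [show slabCell ι = Ioo (0:ℝ) 1 ×ˢ (Ioo (0:ℝ) 1 ×ˢ Ioo (0:ℝ) ι) from rfl,
    Measure.volume_eq_prod ℝ (ℝ×ℝ)] at hint ⊢
  rw [setIntegral_prod _ hint]
  have inner : ∀ x₁ ∈ Ioo (0:ℝ) 1,
      (∫ y in Ioo (0:ℝ) 1 ×ˢ Ioo (0:ℝ) ι, E3f ι u g u (x₁, y))
        = ∫ x₂ in Ioo (0:ℝ) 1,
            -(u (x₁,x₂,0) * (g (x₁,x₂,0) * g (x₁,x₂,0)) * u (x₁,x₂,0)) := by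
    intro x₁ hx₁
    have hslice : IntegrableOn (fun y : ℝ×ℝ => E3f ι u g u (x₁, y))
        (Ioo (0:ℝ) 1 ×ˢ Ioo (0:ℝ) ι) :=
      integrableOn_of_bound hQm hQfin
        ((hE3c.comp (Continuous.continuousOn (by fun_prop))
          (fun y hy => hy.2)).aestronglyMeasurable hQm)
        (fun y hy => hbd (x₁, y) ⟨hx₁, hy⟩)
    rw [Measure.volume_eq_prod ℝ ℝ] at hslice ⊢
    rw [setIntegral_prod _ hslice]
    refine setIntegral_congr_fun measurableSet_Ioo (fun x₂ hx₂ => ?_)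
    have hmaps3 : ∀ t ∈ Icc (0:ℝ) ι, ((x₁, x₂, t) : ℝ×ℝ×ℝ) ∈ slab ι := fun t ht => ht
    have hcu3 : ContinuousOn (fun t : ℝ => u (x₁, x₂, t)) (Icc (0:ℝ) ι) :=
      hu.continuousOn.comp (Continuous.continuousOn (by fun_prop)) hmaps3
    have hcg3 : ContinuousOn (fun t : ℝ => g (x₁, x₂, t)) (Icc (0:ℝ) ι) :=
      hg.continuousOn.comp (Continuous.continuousOn (by fun_prop)) hmaps3
    have hcont : ContinuousOn (fun t => Vfun ι u g u (x₁, x₂, t)) (Icc (0:ℝ) ι) :=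
      ((continuous_const.sub (continuous_id.div_const ι)).continuousOn).mul
        ((hcu3.mul (hcg3.mul hcg3)).mul hcu3)
    have hderiv : ∀ t ∈ Ioo (0:ℝ) ι,
        HasDerivAt (fun t => Vfun ι u g u (x₁, x₂, t)) (E3f ι u g u (x₁, x₂, t)) t :=
      fun t ht =>
        hasDerivAt_V3 (p := (x₁, x₂, t)) (diffAt_U hu ht) (diffAt_U hg ht) (diffAt_U hu ht)
    have hii : IntervalIntegrable (fun t => E3f ι u g u (x₁, x₂, t)) volume 0 ι := by
      rw [intervalIntegrable_iff_integrableOn_Ioo_of_le hι.le]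
      have hlinec : ContinuousOn (fun t : ℝ => E3f ι u g u (x₁, x₂, t)) (Ioo (0:ℝ) ι) :=
        hE3c.comp (Continuous.continuousOn (by fun_prop)) (fun t ht => ht)
      exact integrableOn_of_bound measurableSet_Ioo measure_Ioo_lt_top
        (hlinec.aestronglyMeasurable measurableSet_Ioo)
        (fun t ht => hbd (x₁, x₂, t) ⟨hx₁, hx₂, ht⟩)
    have hFTC := intervalIntegral.integral_eq_sub_of_hasDerivAt_of_le hι.le hcont hderiv hii
    calc (∫ t in Ioo (0:ℝ) ι, E3f ι u g u (x₁, x₂, t))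
        = ∫ t in Ioc (0:ℝ) ι, E3f ι u g u (x₁, x₂, t) := integral_Ioc_eq_integral_Ioo.symm
      _ = ∫ t in (0:ℝ)..ι, E3f ι u g u (x₁, x₂, t) :=
          (intervalIntegral.integral_of_le hι.le).symm
      _ = Vfun ι u g u (x₁, x₂, ι) - Vfun ι u g u (x₁, x₂, 0) := hFTC
      _ = -(u (x₁,x₂,0) * (g (x₁,x₂,0) * g (x₁,x₂,0)) * u (x₁,x₂,0)) := by
          simp only [Vfun]
          rw [div_self (ne_of_gt hι)]
          norm_num
  rw [setIntegral_congr_fun measurableSet_Ioo inner, Measure.volume_eq_prod ℝ ℝ]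
  rw [Measure.volume_eq_prod ℝ ℝ] at htrint
  rw [setIntegral_prod _ htrint]
  simp [integral_neg]

end Claims


lemma chi_abs_le {ι t : ℝ} (hι : 0 < ι) (ht : t ∈ Ioo 0 ι) : |1 - t/ι| ≤ 1 := by
  have h1 : 0 < t/ι := div_pos ht.1 hι
  have h2 : t/ι < 1 := (div_lt_one hι).2 ht.2
  rw [abs_le]; constructor <;> linarith

lemma Aterm_bound {u g w : ℝ×ℝ×ℝ→ℝ} {v p : ℝ×ℝ×ℝ} {N : ℝ}
    (h1 : |fderiv ℝ u p v| ≤ N) (h2 : |g p| ≤ N) (h3 : |u p| ≤ N)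
    (h4 : |fderiv ℝ g p v| ≤ N) (h5 : |w p| ≤ N) (h6 : |fderiv ℝ w p v| ≤ N) :
    |Aterm u g w v p| ≤ 4*N^4 := by
  have hX : |fderiv ℝ u p v * (g p * g p)| ≤ N*(N*N) := abs_mul_le' h1 (abs_mul_le' h2 h2)
  have hY : |u p * (fderiv ℝ g p v * g p + g p * fderiv ℝ g p v)| ≤ N*(N*N+N*N) :=
    abs_mul_le' h3 ((abs_add_le _ _).trans (add_le_add (abs_mul_le' h4 h2) (abs_mul_le' h2 h4)))
  have hZ : |(fderiv ℝ u p v * (g p * g p)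
        + u p * (fderiv ℝ g p v * g p + g p * fderiv ℝ g p v)) * w p|
      ≤ (N*(N*N)+N*(N*N+N*N))*N :=
    abs_mul_le' ((abs_add_le _ _).trans (add_le_add hX hY)) h5
  have hW : |u p * (g p * g p) * fderiv ℝ w p v| ≤ (N*(N*N))*N :=
    abs_mul_le' (abs_mul_le' h3 (abs_mul_le' h2 h2)) h6
  calc |Aterm u g w v p| ≤ (N*(N*N)+N*(N*N+N*N))*N + (N*(N*N))*N :=
        (abs_add_le _ _).trans (add_le_add hZ hW)
    _ = 4*N^4 := by ring


/-- anisotropic trace estimate. Let `ι, θ > 0` and let `B̄` be a `C¹` vector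
field on `𝕋² × [0,ι]` with `|B̄₃| ≥ θ`. Then there is `C > 0` (depending only on the `C¹` norm
of `B̄`, on `θ` and on `ι`) such that for every `C¹` function `f` on `𝕋² × [0,ι]`,
`|f|₀² ≤ C (‖B̄·∇f‖₀ ‖f‖₀ + ‖f‖₀²)`. -/
theorem anisotropic_trace_estimate
    (ι θ : ℝ) (hι : 0 < ι) (hθ : 0 < θ)
    (B : ℝ × ℝ × ℝ → ℝ × ℝ × ℝ)
    (hB : ContDiffOn ℝ 1 B (slab ι))
    (hBper : TorusPeriodic (fun z => (B z).1) ∧ TorusPeriodic (fun z => (B z).2.1) ∧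
      TorusPeriodic (fun z => (B z).2.2))
    (hB3 : ∀ z ∈ slab ι, θ ≤ |(B z).2.2|) :
    ∃ C : ℝ, 0 < C ∧
      ∀ f : ℝ × ℝ × ℝ → ℝ, ContDiffOn ℝ 1 f (slab ι) → TorusPeriodic f →
        (∫ x in Ioo (0 : ℝ) 1 ×ˢ Ioo (0 : ℝ) 1, f (x.1, x.2, 0) ^ 2) ≤
          C * (Real.sqrt (∫ z in slabCell ι, Bgrad B f z ^ 2)
                * Real.sqrt (∫ z in slabCell ι, f z ^ 2)
              + ∫ z in slabCell ι, f z ^ 2) := by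
  classical
  obtain ⟨hPb1, hPb2, hPb3⟩ := hBper
  set b1 : ℝ×ℝ×ℝ → ℝ := fun z => (B z).1 with hb1def
  set b2 : ℝ×ℝ×ℝ → ℝ := fun z => (B z).2.1 with hb2def
  set b3 : ℝ×ℝ×ℝ → ℝ := fun z => (B z).2.2 with hb3def
  have hb1 : ContDiffOn ℝ 1 b1 (slab ι) := contDiff_fst.comp_contDiffOn hB
  have hb2 : ContDiffOn ℝ 1 b2 (slab ι) := (contDiff_fst.comp contDiff_snd).comp_contDiffOn hB
  have hb3 : ContDiffOn ℝ 1 b3 (slab ι) := (contDiff_snd.comp contDiff_snd).comp_contDiffOn hB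
  obtain ⟨M₁, hM₁0, hM₁⟩ := bound_aux hι hb1
  obtain ⟨M₂, hM₂0, hM₂⟩ := bound_aux hι hb2
  obtain ⟨M₃, hM₃0, hM₃⟩ := bound_aux hι hb3
  set M : ℝ := max M₁ (max M₂ M₃) with hMdef
  have hM0 : 0 < M := lt_of_lt_of_le hM₁0 (le_max_left _ _)
  have hMb : ∀ p ∈ slabCell ι,
      (|b1 p| ≤ M ∧ |b2 p| ≤ M ∧ |b3 p| ≤ M) ∧
      ∀ v : ℝ×ℝ×ℝ, ‖v‖ ≤ 1 →
        (|fderiv ℝ b1 p v| ≤ M ∧ |fderiv ℝ b2 p v| ≤ M ∧ |fderiv ℝ b3 p v| ≤ M) := by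
    intro p hp
    have h1 := hM₁ p hp; have h2 := hM₂ p hp; have h3 := hM₃ p hp
    have l1 : M₁ ≤ M := le_max_left _ _
    have l2 : M₂ ≤ M := le_trans (le_max_left _ _) (le_max_right _ _)
    have l3 : M₃ ≤ M := le_trans (le_max_right _ _) (le_max_right _ _)
    exact ⟨⟨h1.1.trans l1, h2.1.trans l2, h3.1.trans l3⟩,
      fun v hv => ⟨(h1.2 v hv).trans l1, (h2.2 v hv).trans l2, (h3.2 v hv).trans l3⟩⟩
  set Cc : ℝ := M^2/ι + 6*M^2 with hCcdef
  have hCc0 : 0 < Cc := by positivity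
  set K : ℝ := max (2*M) Cc + 1 with hKdef
  have hK0 : 0 < K := by positivity
  refine ⟨K / θ^2, by positivity, ?_⟩
  intro f hf hfper
  obtain ⟨Mf, hMf0, hMf⟩ := bound_aux hι hf
  set N : ℝ := max M Mf with hNdef
  have hN0 : 0 < N := lt_of_lt_of_le hM0 (le_max_left _ _)
  have hfbN : ∀ p ∈ slabCell ι, |f p| ≤ N ∧
      ∀ v : ℝ×ℝ×ℝ, ‖v‖ ≤ 1 → |fderiv ℝ f p v| ≤ N := by
    intro p hp
    exact ⟨(hMf p hp).1.trans (le_max_right _ _),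
      fun v hv => ((hMf p hp).2 v hv).trans (le_max_right _ _)⟩
  have hbbN : ∀ p ∈ slabCell ι,
      (|b1 p| ≤ N ∧ |b2 p| ≤ N ∧ |b3 p| ≤ N) ∧
      ∀ v : ℝ×ℝ×ℝ, ‖v‖ ≤ 1 →
        (|fderiv ℝ b1 p v| ≤ N ∧ |fderiv ℝ b2 p v| ≤ N ∧ |fderiv ℝ b3 p v| ≤ N) := by
    intro p hp
    obtain ⟨⟨u1, u2, u3⟩, hv⟩ := hMb p hp
    have hMN : M ≤ N := le_max_left _ _
    exact ⟨⟨u1.trans hMN, u2.trans hMN, u3.trans hMN⟩,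
      fun v hvn => ⟨((hv v hvn).1).trans hMN, ((hv v hvn).2.1).trans hMN,
        ((hv v hvn).2.2).trans hMN⟩⟩
  have hbdA : ∀ p ∈ slabCell ι, |E1f ι b3 f b1 p| ≤ 4*N^4 := by
    intro p hp
    obtain ⟨⟨v1, v2, v3⟩, hv⟩ := hbbN p hp
    obtain ⟨w1, w2⟩ := hfbN p hp
    have h := Aterm_bound (v := e1v) (hv e1v norm_e1v).2.2 w1 v3 (w2 e1v norm_e1v) v1
      (hv e1v norm_e1v).1
    have := abs_mul_le' (chi_abs_le hι hp.2.2) h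
    simpa [E1f] using this
  have hbdB : ∀ p ∈ slabCell ι, |E2f ι b3 f b2 p| ≤ 4*N^4 := by
    intro p hp
    obtain ⟨⟨v1, v2, v3⟩, hv⟩ := hbbN p hp
    obtain ⟨w1, w2⟩ := hfbN p hp
    have h := Aterm_bound (v := e2v) (hv e2v norm_e2v).2.2 w1 v3 (w2 e2v norm_e2v) v2
      (hv e2v norm_e2v).2.1
    have := abs_mul_le' (chi_abs_le hι hp.2.2) h
    simpa [E2f] using this
  have hbdC : ∀ p ∈ slabCell ι, |E3f ι b3 f b3 p| ≤ (1/ι)*N^4 + 4*N^4 := by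
    intro p hp
    obtain ⟨⟨v1, v2, v3⟩, hv⟩ := hbbN p hp
    obtain ⟨w1, w2⟩ := hfbN p hp
    have h := Aterm_bound (v := e3v) (hv e3v norm_e3v).2.2 w1 v3 (w2 e3v norm_e3v) v3
      (hv e3v norm_e3v).2.2
    have hterm2 : |(1 - p.2.2/ι) * Aterm b3 f b3 e3v p| ≤ 4*N^4 :=
      (abs_mul_le' (chi_abs_le hι hp.2.2) h).trans (by rw [one_mul])
    have hterm1 : |-(1/ι) * (b3 p * (f p * f p) * b3 p)| ≤ (1/ι)*N^4 := by
      have hin : |b3 p * (f p * f p) * b3 p| ≤ N*(N*N)*N :=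
        abs_mul_le' (abs_mul_le' v3 (abs_mul_le' w1 w1)) v3
      calc |-(1/ι) * (b3 p * (f p * f p) * b3 p)|
          ≤ (1/ι) * (N*(N*N)*N) := by
            rw [abs_mul, abs_neg, abs_of_pos (by positivity : (0:ℝ) < 1/ι)]
            exact mul_le_mul_of_nonneg_left hin (by positivity)
        _ = (1/ι)*N^4 := by ring
    calc |E3f ι b3 f b3 p| ≤ _ := abs_add_le _ _
      _ ≤ (1/ι)*N^4 + 4*N^4 := add_le_add hterm1 hterm2
  have hmapsSq : ∀ x ∈ (Icc (0:ℝ) 1 ×ˢ Icc (0:ℝ) 1 : Set (ℝ×ℝ)),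
      ((x.1, x.2, 0) : ℝ×ℝ×ℝ) ∈ slab ι := fun x _ => ⟨le_rfl, hι.le⟩
  have hcfSq : ContinuousOn (fun x : ℝ×ℝ => f (x.1, x.2, 0)) (Icc (0:ℝ) 1 ×ˢ Icc (0:ℝ) 1) :=
    hf.continuousOn.comp (Continuous.continuousOn (by fun_prop)) hmapsSq
  have hcb3Sq : ContinuousOn (fun x : ℝ×ℝ => b3 (x.1, x.2, 0)) (Icc (0:ℝ) 1 ×ˢ Icc (0:ℝ) 1) :=
    hb3.continuousOn.comp (Continuous.continuousOn (by fun_prop)) hmapsSq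
  have hBgrad_eq : Bgrad B f = fun z =>
      b1 z * fderiv ℝ f z e1v + b2 z * fderiv ℝ f z e2v + b3 z * fderiv ℝ f z e3v := rfl
  have hBgc : ContinuousOn (Bgrad B f) (slabU ι) := by
    rw [hBgrad_eq]
    exact (((contOn_U hb1).mul (contOn_fderiv_U hf e1v)).add
      ((contOn_U hb2).mul (contOn_fderiv_U hf e2v))).add
      ((contOn_U hb3).mul (contOn_fderiv_U hf e3v))
  have hBgbd : ∀ p ∈ slabCell ι, |Bgrad B f p| ≤ M*Mf + M*Mf + M*Mf := by
    intro p hp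
    obtain ⟨⟨v1, v2, v3⟩, _⟩ := hMb p hp
    have hdf := (hMf p hp).2
    rw [hBgrad_eq]
    exact (abs_add_le _ _).trans (add_le_add
      ((abs_add_le _ _).trans (add_le_add (abs_mul_le' v1 (hdf e1v norm_e1v))
        (abs_mul_le' v2 (hdf e2v norm_e2v))))
      (abs_mul_le' v3 (hdf e3v norm_e3v)))
  -- the three main integral identities
  have hA : ∫ z in slabCell ι, E1f ι b3 f b1 z = 0 :=
    claimA hι b3 f b1 hb3 hf hb1 hPb3.1 hfper.1 hPb1.1 _ hbdA
  have hB2' : ∫ z in slabCell ι, E2f ι b3 f b2 z = 0 :=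
    claimB hι b3 f b2 hb3 hf hb2 hPb3.2 hfper.2 hPb2.2 _ hbdB
  have hC : ∫ z in slabCell ι, E3f ι b3 f b3 z
      = - ∫ x in Ioo (0:ℝ) 1 ×ˢ Ioo (0:ℝ) 1,
          (b3 (x.1,x.2,0) * (f (x.1,x.2,0) * f (x.1,x.2,0)) * b3 (x.1,x.2,0)) :=
    claimC hι b3 f hb3 hf _ hbdC
  -- integrability facts on the cell
  have hintE1 : IntegrableOn (E1f ι b3 f b1) (slabCell ι) :=
    integrableOn_of_bound hcellm hcellfin
      (((contOn_E1U hb3 hf hb1).mono cell_subset_slabU).aestronglyMeasurable hcellm) hbdA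
  have hintE2 : IntegrableOn (E2f ι b3 f b2) (slabCell ι) :=
    integrableOn_of_bound hcellm hcellfin
      (((contOn_E2U hb3 hf hb2).mono cell_subset_slabU).aestronglyMeasurable hcellm) hbdB
  have hintE3 : IntegrableOn (E3f ι b3 f b3) (slabCell ι) :=
    integrableOn_of_bound hcellm hcellfin
      (((contOn_E3U hb3 hf hb3).mono cell_subset_slabU).aestronglyMeasurable hcellm) hbdC
  have hintf2 : IntegrableOn (fun z => f z ^ 2) (slabCell ι) :=
    integrableOn_of_bound hcellm hcellfin
      ((((contOn_U hf).pow 2).mono cell_subset_slabU).aestronglyMeasurable hcellm)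
      (fun p hp => by
        rw [abs_pow]
        exact pow_le_pow_left₀ (abs_nonneg _) (hMf p hp).1 2)
  have hintfB : IntegrableOn (fun z => |f z * Bgrad B f z|) (slabCell ι) :=
    integrableOn_of_bound hcellm hcellfin
      (((((contOn_U hf).mul hBgc).abs).mono cell_subset_slabU).aestronglyMeasurable hcellm)
      (fun p hp => by
        rw [abs_abs]
        exact abs_mul_le' (hMf p hp).1 (le_refl _) |>.trans
          (mul_le_mul_of_nonneg_left (hBgbd p hp) hMf0.le))
  -- pointwise bound
  have hptbd : ∀ p ∈ slabCell ι,
      |E1f ι b3 f b1 p + E2f ι b3 f b2 p + E3f ι b3 f b3 p|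
        ≤ Cc * f p ^ 2 + (2*M) * |f p * Bgrad B f p| := by
    intro p hp
    obtain ⟨⟨v1, v2, v3⟩, hv⟩ := hMb p hp
    obtain ⟨w1, _⟩ := hMf p hp
    have hid : E1f ι b3 f b1 p + E2f ι b3 f b2 p + E3f ι b3 f b3 p
        = -(1/ι) * (b3 p * (f p * f p) * b3 p)
          + (1 - p.2.2/ι) *
            ((f p * f p) * (fderiv ℝ b3 p e1v * b1 p + fderiv ℝ b3 p e2v * b2 p
                + fderiv ℝ b3 p e3v * b3 p)
              + 2 * (b3 p * (f p * Bgrad B f p))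
              + (b3 p * (f p * f p)) * (fderiv ℝ b1 p e1v + fderiv ℝ b2 p e2v
                + fderiv ℝ b3 p e3v)) := by
      simp only [E1f, E2f, E3f, Aterm, Bgrad, hb1def, hb2def, hb3def, e1v, e2v, e3v]
      ring
    have hff : |f p * f p| = f p ^ 2 := by rw [abs_mul_self]; ring
    have h1 : |-(1/ι) * (b3 p * (f p * f p) * b3 p)| ≤ (1/ι) * (M * f p^2 * M) := by
      rw [abs_mul, abs_neg, abs_of_pos (by positivity : (0:ℝ) < 1/ι)]
      exact mul_le_mul_of_nonneg_left
        (abs_mul_le' (abs_mul_le' v3 (le_of_eq hff)) v3) (by positivity)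
    have h2 : |(f p * f p) * (fderiv ℝ b3 p e1v * b1 p + fderiv ℝ b3 p e2v * b2 p
        + fderiv ℝ b3 p e3v * b3 p)| ≤ f p^2 * (M*M + M*M + M*M) := by
      refine abs_mul_le' (le_of_eq hff) ?_
      exact (abs_add_le _ _).trans (add_le_add
        ((abs_add_le _ _).trans (add_le_add
          (abs_mul_le' ((hv e1v norm_e1v).2.2) v1)
          (abs_mul_le' ((hv e2v norm_e2v).2.2) v2)))
        (abs_mul_le' ((hv e3v norm_e3v).2.2) v3))
    have h3 : |2 * (b3 p * (f p * Bgrad B f p))| ≤ 2 * (M * |f p * Bgrad B f p|) := by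
      rw [abs_mul, abs_two]
      exact mul_le_mul_of_nonneg_left (abs_mul_le' v3 (le_refl _)) (by norm_num)
    have h4 : |(b3 p * (f p * f p)) * (fderiv ℝ b1 p e1v + fderiv ℝ b2 p e2v
        + fderiv ℝ b3 p e3v)| ≤ (M * f p^2) * (M + M + M) := by
      refine abs_mul_le' (abs_mul_le' v3 (le_of_eq hff)) ?_
      exact (abs_add_le _ _).trans (add_le_add
        ((abs_add_le _ _).trans (add_le_add ((hv e1v norm_e1v).1) ((hv e2v norm_e2v).2.1)))
        ((hv e3v norm_e3v).2.2))
    have hχ1 : |1 - p.2.2/ι| ≤ 1 := chi_abs_le hι hp.2.2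
    have hsum2 : |(f p * f p) * (fderiv ℝ b3 p e1v * b1 p + fderiv ℝ b3 p e2v * b2 p
            + fderiv ℝ b3 p e3v * b3 p)
          + 2 * (b3 p * (f p * Bgrad B f p))
          + (b3 p * (f p * f p)) * (fderiv ℝ b1 p e1v + fderiv ℝ b2 p e2v
            + fderiv ℝ b3 p e3v)|
        ≤ f p^2 * (M*M + M*M + M*M) + 2 * (M * |f p * Bgrad B f p|)
          + (M * f p^2) * (M + M + M) :=
      (abs_add_le _ _).trans (add_le_add ((abs_add_le _ _).trans (add_le_add h2 h3)) h4)
    calc |E1f ι b3 f b1 p + E2f ι b3 f b2 p + E3f ι b3 f b3 p|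
        ≤ (1/ι) * (M * f p^2 * M)
          + 1 * (f p^2 * (M*M + M*M + M*M) + 2 * (M * |f p * Bgrad B f p|)
            + (M * f p^2) * (M + M + M)) := by
          rw [hid]
          exact (abs_add_le _ _).trans (add_le_add h1 (abs_mul_le' hχ1 hsum2))
      _ = Cc * f p ^ 2 + (2*M) * |f p * Bgrad B f p| := by rw [hCcdef]; ring
  -- trace comparison
  have htr_int : IntegrableOn (fun x : ℝ×ℝ => f (x.1,x.2,0) ^ 2)
      (Ioo (0:ℝ) 1 ×ˢ Ioo (0:ℝ) 1) :=
    ((hcfSq.pow 2).integrableOn_compact (isCompact_Icc.prod isCompact_Icc)).mono_set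
      (prod_mono Ioo_subset_Icc_self Ioo_subset_Icc_self)
  have htr_int2 : IntegrableOn
      (fun x : ℝ×ℝ => b3 (x.1,x.2,0) * (f (x.1,x.2,0) * f (x.1,x.2,0)) * b3 (x.1,x.2,0))
      (Ioo (0:ℝ) 1 ×ˢ Ioo (0:ℝ) 1) :=
    (((hcb3Sq.mul (hcfSq.mul hcfSq)).mul hcb3Sq).integrableOn_compact
      (isCompact_Icc.prod isCompact_Icc)).mono_set
      (prod_mono Ioo_subset_Icc_self Ioo_subset_Icc_self)
  have htrace : θ^2 * ∫ x in Ioo (0:ℝ) 1 ×ˢ Ioo (0:ℝ) 1, f (x.1,x.2,0) ^ 2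
      ≤ ∫ x in Ioo (0:ℝ) 1 ×ˢ Ioo (0:ℝ) 1,
          (b3 (x.1,x.2,0) * (f (x.1,x.2,0) * f (x.1,x.2,0)) * b3 (x.1,x.2,0)) := by
    rw [← integral_const_mul]
    refine setIntegral_mono_on (htr_int.const_mul _) htr_int2
      (measurableSet_Ioo.prod measurableSet_Ioo) ?_
    intro x hx
    have hmem : ((x.1,x.2,0) : ℝ×ℝ×ℝ) ∈ slab ι := by
      simp only [slab, mem_setOf_eq]
      exact ⟨le_refl 0, hι.le⟩
    have h3 := hB3 _ hmem
    have h3' : θ^2 ≤ b3 (x.1,x.2,0) ^ 2 := by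
      have := sq_abs (b3 (x.1,x.2,0))
      nlinarith
    nlinarith [sq_nonneg (f (x.1,x.2,0))]
  -- Cauchy-Schwarz
  have hfincell : volume (slabCell ι) < ⊤ := hcellfin
  have hCS : ∫ z in slabCell ι, |f z * Bgrad B f z|
      ≤ Real.sqrt (∫ z in slabCell ι, Bgrad B f z ^ 2)
        * Real.sqrt (∫ z in slabCell ι, f z ^ 2) := by
    haveI : IsFiniteMeasure (volume.restrict (slabCell ι)) :=
      ⟨by rw [Measure.restrict_apply_univ]; exact hcellfin⟩
    have h := cauchy_schwarz_integral (μ := volume.restrict (slabCell ι))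
      (u := f) (v := Bgrad B f)
      (((contOn_U hf).mono cell_subset_slabU).aestronglyMeasurable hcellm)
      ((hBgc.mono cell_subset_slabU).aestronglyMeasurable hcellm)
      ((ae_restrict_iff' hcellm).2 (Filter.Eventually.of_forall
        (fun p hp => by rw [Real.norm_eq_abs]; exact (hMf p hp).1)))
      ((ae_restrict_iff' hcellm).2 (Filter.Eventually.of_forall
        (fun p hp => by rw [Real.norm_eq_abs]; exact hBgbd p hp)))
    exact h.trans (le_of_eq (mul_comm _ _))
  -- assemble
  have hsum : ∫ z in slabCell ι,
      (E1f ι b3 f b1 z + E2f ι b3 f b2 z + E3f ι b3 f b3 z)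
      = (∫ z in slabCell ι, E1f ι b3 f b1 z) + (∫ z in slabCell ι, E2f ι b3 f b2 z)
        + (∫ z in slabCell ι, E3f ι b3 f b3 z) := by
    have h12 : IntegrableOn (fun z => E1f ι b3 f b1 z + E2f ι b3 f b2 z) (slabCell ι) :=
      hintE1.add hintE2
    rw [integral_add h12 hintE3, integral_add hintE1 hintE2]
  have hbound : - ∫ z in slabCell ι,
      (E1f ι b3 f b1 z + E2f ι b3 f b2 z + E3f ι b3 f b3 z)
      ≤ Cc * (∫ z in slabCell ι, f z ^ 2)
        + (2*M) * ∫ z in slabCell ι, |f z * Bgrad B f z| := by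
    have h1 : - ∫ z in slabCell ι,
        (E1f ι b3 f b1 z + E2f ι b3 f b2 z + E3f ι b3 f b3 z)
        ≤ ∫ z in slabCell ι,
          (Cc * f z ^ 2 + (2*M) * |f z * Bgrad B f z|) := by
      rw [← integral_neg]
      have h123 : IntegrableOn
          (fun z => E1f ι b3 f b1 z + E2f ι b3 f b2 z + E3f ι b3 f b3 z) (slabCell ι) :=
        (hintE1.add hintE2).add hintE3
      refine setIntegral_mono_on h123.neg
        ((hintf2.const_mul _).add (hintfB.const_mul _))
        (measurableSet_Ioo.prod (measurableSet_Ioo.prod measurableSet_Ioo)) ?_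
      intro p hp
      have := hptbd p hp
      have := neg_abs_le (E1f ι b3 f b1 p + E2f ι b3 f b2 p + E3f ι b3 f b3 p)
      linarith
    rw [integral_add (hintf2.const_mul _) (hintfB.const_mul _),
      integral_const_mul, integral_const_mul] at h1
    exact h1
  set T := ∫ x in Ioo (0:ℝ) 1 ×ˢ Ioo (0:ℝ) 1,
      (b3 (x.1,x.2,0) * (f (x.1,x.2,0) * f (x.1,x.2,0)) * b3 (x.1,x.2,0)) with hTdef
  have hTle : T ≤ Cc * (∫ z in slabCell ι, f z ^ 2)
      + (2*M) * ∫ z in slabCell ι, |f z * Bgrad B f z| := by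
    have : T = - ∫ z in slabCell ι,
        (E1f ι b3 f b1 z + E2f ι b3 f b2 z + E3f ι b3 f b3 z) := by
      rw [hsum, hA, hB2', hC]; ring
    rw [this]; exact hbound
  -- final chain
  set R := Real.sqrt (∫ z in slabCell ι, Bgrad B f z ^ 2) with hRdef
  set S := Real.sqrt (∫ z in slabCell ι, f z ^ 2) with hSdef
  have hR0 : 0 ≤ R := Real.sqrt_nonneg _
  have hS0 : 0 ≤ S := Real.sqrt_nonneg _
  have hf20 : 0 ≤ ∫ z in slabCell ι, f z ^ 2 :=
    integral_nonneg (fun z => sq_nonneg _)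
  have key : θ^2 * ∫ x in Ioo (0:ℝ) 1 ×ˢ Ioo (0:ℝ) 1, f (x.1,x.2,0) ^ 2
      ≤ K * (R * S + ∫ z in slabCell ι, f z ^ 2) := by
    have h2M : 2*M ≤ K := by
      have := le_max_left (2*M) Cc; linarith
    have hCcK : Cc ≤ K := by
      have := le_max_right (2*M) Cc; linarith
    have hfB0 : 0 ≤ ∫ z in slabCell ι, |f z * Bgrad B f z| :=
      integral_nonneg (fun z => abs_nonneg _)
    have step1 : (2*M) * (∫ z in slabCell ι, |f z * Bgrad B f z|) ≤ (2*M) * (R * S) :=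
      mul_le_mul_of_nonneg_left hCS (by linarith)
    have step2 : θ^2 * ∫ x in Ioo (0:ℝ) 1 ×ˢ Ioo (0:ℝ) 1, f (x.1,x.2,0) ^ 2
        ≤ Cc * (∫ z in slabCell ι, f z ^ 2) + (2*M) * (R * S) := by
      calc θ^2 * ∫ x in Ioo (0:ℝ) 1 ×ˢ Ioo (0:ℝ) 1, f (x.1,x.2,0) ^ 2 ≤ T := htrace
        _ ≤ _ := hTle.trans (by linarith)
    have step3 : Cc * (∫ z in slabCell ι, f z ^ 2) ≤ K * (∫ z in slabCell ι, f z ^ 2) :=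
      mul_le_mul_of_nonneg_right hCcK hf20
    have step4 : (2*M) * (R * S) ≤ K * (R * S) :=
      mul_le_mul_of_nonneg_right h2M (mul_nonneg hR0 hS0)
    calc θ^2 * ∫ x in Ioo (0:ℝ) 1 ×ˢ Ioo (0:ℝ) 1, f (x.1,x.2,0) ^ 2
        ≤ Cc * (∫ z in slabCell ι, f z ^ 2) + (2*M) * (R * S) := step2
      _ ≤ K * (∫ z in slabCell ι, f z ^ 2) + K * (R * S) := add_le_add step3 step4
      _ = K * (R * S + ∫ z in slabCell ι, f z ^ 2) := by ring
  have hθ2 : (0:ℝ) < θ^2 := by positivity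
  rw [div_mul_eq_mul_div, le_div_iff₀ hθ2]
  calc (∫ x in Ioo (0:ℝ) 1 ×ˢ Ioo (0:ℝ) 1, f (x.1,x.2,0) ^ 2) * θ^2
      = θ^2 * ∫ x in Ioo (0:ℝ) 1 ×ˢ Ioo (0:ℝ) 1, f (x.1,x.2,0) ^ 2 := by ring
    _ ≤ K * (R * S + ∫ z in slabCell ι, f z ^ 2) := key
end
end

section
/- Assume that at every point of Σ₀: η⁺ = η⁻, v⁺ = v⁻, and (∇_{A⁺}v⁺) N⁺ = (∇_{A⁻}v⁻) N⁻. Then ∇_{A⁺}v⁺ = ∇_{A⁻}v⁻ at every point of Σ₀; that is, the jump conditions [v] = 0 and [∇_A v] N = 0 across Σ₀ imply the full condition [∇_A v] = 0 on Σ₀. -/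
noncomputable section

open Matrix Set

/-- Points of ℝ³ as functions `Fin 3 → ℝ`. -/
abbrev V3 : Type := Fin 3 → ℝ

/-- Spatial partial derivative `∂ₖ g`. -/
def dxs (k : Fin 3) (g : V3 → ℝ) (x : V3) : ℝ := fderiv ℝ g x (Pi.single k 1)

/-- The Jacobian matrix `(∇η)_{ij} = ∂ηᵢ/∂xⱼ`. -/
def jacS (η : V3 → V3) (x : V3) : Matrix (Fin 3) (Fin 3) ℝ :=
  Matrix.of fun i j => dxs j (fun y => η y i) x

/-- The matrix `A = (∇η)⁻ᵀ`. -/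
def AmatS (η : V3 → V3) (x : V3) : Matrix (Fin 3) (Fin 3) ℝ := ((jacS η x)⁻¹)ᵀ

/-- The matrix `(∇_A v)_{ij} = Σₖ Aⱼₖ ∂ₖ vᵢ`. -/
def gradA (η v : V3 → V3) (x : V3) : Matrix (Fin 3) (Fin 3) ℝ :=
  Matrix.of fun i j => ∑ k, AmatS η x j k * dxs k (fun y => v y i) x

/-- `N = ∂₁η × ∂₂η`, the cross product of the first two columns of `∇η`. -/
def NvecS (η : V3 → V3) (x : V3) : V3 :=
  crossProduct (fun i => jacS η x i 0) (fun i => jacS η x i 1)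

lemma tangential (D : Set V3) (hD : IsOpen D) {x : V3} (hx : x ∈ D) (hx2 : x 2 = 0)
    {f g : V3 → ℝ} (hf : DifferentiableAt ℝ f x) (hg : DifferentiableAt ℝ g x)
    (hfg : ∀ y ∈ D, y 2 = 0 → f y = g y) {k : Fin 3} (hk : k ≠ 2) :
    dxs k f x = dxs k g x := by
  set e : V3 := Pi.single k 1 with he
  have he2 : e 2 = 0 := Pi.single_eq_of_ne (Ne.symm hk) 1
  have hline : HasDerivAt (fun t : ℝ => x + t • e) e 0 := by
    simpa using ((hasDerivAt_id (0:ℝ)).smul_const e).const_add x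
  have hl0 : (fun t : ℝ => x + t • e) 0 = x := by simp
  have hf' : HasFDerivAt f (fderiv ℝ f x) (x + (0:ℝ) • e) := by simpa using hf.hasFDerivAt
  have hg' : HasFDerivAt g (fderiv ℝ g x) (x + (0:ℝ) • e) := by simpa using hg.hasFDerivAt
  have hF : HasDerivAt (fun t : ℝ => f (x + t • e)) (fderiv ℝ f x e) 0 :=
    hf'.comp_hasDerivAt 0 hline
  have hG : HasDerivAt (fun t : ℝ => g (x + t • e)) (fderiv ℝ g x e) 0 :=
    hg'.comp_hasDerivAt 0 hline
  have hmem : ∀ᶠ t : ℝ in nhds 0, x + t • e ∈ D := by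
    have hc : ContinuousAt (fun t : ℝ => x + t • e) 0 := by fun_prop
    exact hc.preimage_mem_nhds (by simpa using hD.mem_nhds hx)
  have heq : (fun t : ℝ => f (x + t • e)) =ᶠ[nhds 0] (fun t : ℝ => g (x + t • e)) := by
    filter_upwards [hmem] with t ht
    exact hfg _ ht (by simp [he2, hx2])
  have := (hF.congr_of_eventuallyEq heq.symm).unique hG
  simpa [dxs] using this

lemma gradA_eq (η v : V3 → V3) (x : V3) : gradA η v x = jacS v x * (jacS η x)⁻¹ := by
  ext i j
  simp [gradA, AmatS, Matrix.mul_apply, jacS, Matrix.transpose_apply, mul_comm]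

lemma gradA_mul_jac (η v : V3 → V3) (x : V3) (h : IsUnit (jacS η x).det) :
    gradA η v x * jacS η x = jacS v x := by
  rw [gradA_eq, Matrix.nonsing_inv_mul_cancel_right _ _ h]

lemma det_updateB (J : Matrix (Fin 3) (Fin 3) ℝ)
    (n : V3) (hn : n = crossProduct (fun i => J i 0) (fun i => J i 1)) :
    (Matrix.of fun i j => if j = 2 then n i else J i j).det = n 0 ^ 2 + n 1 ^ 2 + n 2 ^ 2 := by
  subst hn
  simp [Matrix.det_fin_three, cross_apply]
  ring

lemma det_eq_dot (J : Matrix (Fin 3) (Fin 3) ℝ)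
    (n : V3) (hn : n = crossProduct (fun i => J i 0) (fun i => J i 1)) :
    J.det = n 0 * J 0 2 + n 1 * J 1 2 + n 2 * J 2 2 := by
  subst hn
  simp [Matrix.det_fin_three, cross_apply]
  ring


/-- If on the flat interface `Σ₀ = D ∩ {x₃ = 0}` one has `η⁺ = η⁻`, `v⁺ = v⁻`
and `(∇_{A⁺}v⁺) N⁺ = (∇_{A⁻}v⁻) N⁻`, then `∇_{A⁺}v⁺ = ∇_{A⁻}v⁻` on `Σ₀`: the jump conditions
`[v] = 0`, `[∇_A v] N = 0` imply the full condition `[∇_A v] = 0` on `Σ₀`. -/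
theorem gradient_jump_condition
    (D : Set V3) (hD : IsOpen D) (hne : (D ∩ {x | x 2 = 0}).Nonempty)
    (ηp ηm vp vm : V3 → V3)
    (hηp : ContDiffOn ℝ 1 ηp D) (hηm : ContDiffOn ℝ 1 ηm D)
    (hvp : ContDiffOn ℝ 1 vp D) (hvm : ContDiffOn ℝ 1 vm D)
    (hinvp : ∀ x ∈ D, IsUnit (jacS ηp x).det)
    (hinvm : ∀ x ∈ D, IsUnit (jacS ηm x).det)
    (hηjump : ∀ x ∈ D, x 2 = 0 → ηp x = ηm x)
    (hvjump : ∀ x ∈ D, x 2 = 0 → vp x = vm x)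
    (hNjump : ∀ x ∈ D, x 2 = 0 →
      gradA ηp vp x *ᵥ NvecS ηp x = gradA ηm vm x *ᵥ NvecS ηm x) :
    ∀ x ∈ D, x 2 = 0 → gradA ηp vp x = gradA ηm vm x := by
  intro x hx hx2
  have hdiff : ∀ (w : V3 → V3), ContDiffOn ℝ 1 w D → ∀ i, DifferentiableAt ℝ (fun y => w y i) x := by
    intro w hw i
    have : DifferentiableAt ℝ w x :=
      (hw.differentiableOn one_ne_zero).differentiableAt (hD.mem_nhds hx)
    exact (differentiableAt_pi.mp this) i
  -- tangential derivatives agree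
  have hJtan : ∀ i : Fin 3, ∀ j : Fin 3, j ≠ 2 → jacS ηp x i j = jacS ηm x i j := by
    intro i j hj
    exact tangential D hD hx hx2 (hdiff _ hηp i) (hdiff _ hηm i)
      (fun y hy hy2 => by rw [hηjump y hy hy2]) hj
  have hVtan : ∀ i : Fin 3, ∀ j : Fin 3, j ≠ 2 → jacS vp x i j = jacS vm x i j := by
    intro i j hj
    exact tangential D hD hx hx2 (hdiff _ hvp i) (hdiff _ hvm i)
      (fun y hy hy2 => by rw [hvjump y hy hy2]) hj
  have hN : NvecS ηp x = NvecS ηm x := by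
    unfold NvecS
    rw [show (fun i => jacS ηp x i 0) = (fun i => jacS ηm x i 0) from
        funext fun i => hJtan i 0 (by decide),
      show (fun i => jacS ηp x i 1) = (fun i => jacS ηm x i 1) from
        funext fun i => hJtan i 1 (by decide)]
  set n : V3 := NvecS ηp x with hnd
  set B : Matrix (Fin 3) (Fin 3) ℝ := Matrix.of (fun i j => if j = 2 then n i else jacS ηp x i j) with hB
  have hdetB : IsUnit B.det := by
    rw [hB, det_updateB (jacS ηp x) n hnd]
    rw [isUnit_iff_ne_zero]
    intro h0
    have h0' : n 0 = 0 ∧ n 1 = 0 ∧ n 2 = 0 := by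
      constructor
      · nlinarith [sq_nonneg (n 0), sq_nonneg (n 1), sq_nonneg (n 2)]
      constructor
      · nlinarith [sq_nonneg (n 0), sq_nonneg (n 1), sq_nonneg (n 2)]
      · nlinarith [sq_nonneg (n 0), sq_nonneg (n 1), sq_nonneg (n 2)]
    have hdJ : (jacS ηp x).det = 0 := by
      rw [det_eq_dot (jacS ηp x) n hnd, h0'.1, h0'.2.1, h0'.2.2]; ring
    exact (isUnit_iff_ne_zero.mp (hinvp x hx)) hdJ
  have hMB : gradA ηp vp x * B = gradA ηm vm x * B := by
    ext i j
    by_cases hj : j = 2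
    · subst hj
      have hmv := congrFun (hNjump x hx hx2) i
      rw [← hN] at hmv
      simpa [Matrix.mul_apply, hB, Matrix.mulVec, dotProduct] using hmv
    · have h1 : (gradA ηp vp x * B) i j = (gradA ηp vp x * jacS ηp x) i j := by
        simp [Matrix.mul_apply, hB, hj]
      have h2 : (gradA ηm vm x * B) i j = (gradA ηm vm x * jacS ηm x) i j := by
        simp only [Matrix.mul_apply, hB, Matrix.of_apply, if_neg hj]
        congr 1; ext k; rw [hJtan k j hj]
      rw [h1, h2, gradA_mul_jac _ _ _ (hinvp x hx), gradA_mul_jac _ _ _ (hinvm x hx)]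
      exact hVtan i j hj
  calc gradA ηp vp x = gradA ηp vp x * B * B⁻¹ := by
        rw [Matrix.mul_nonsing_inv_cancel_right _ _ hdetB]
    _ = gradA ηm vm x * B * B⁻¹ := by rw [hMB]
    _ = gradA ηm vm x := by rw [Matrix.mul_nonsing_inv_cancel_right _ _ hdetB]
end
end
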